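/- arXiv:2409.04374 — 2 statements merged into one kernel-verified Lean document; each statement's English description precedes it below -/
import Mathlib

section
/- Let T, K be positive integers, data z_t, z'_t ∈ ℝ^{D_z} and g_t ∈ ℝ for t = 1,…,T, discount factor α ∈ [0,1), weights ξ ∈ ℝ^K, means m_1,…,m_K ∈ ℝ^{D_z}, and positive-definite symmetric covariances C_1,…,C_K. Let Q be the associated GMM Q-function and set δ_t := g_t + α Q(z'_t) − Q(z_t). Fix k ∈ {1,…,K}. Then ℒ, viewed as a function of m_k alone (all other parameters fixed), is differentiable, and its gradient at m_k equals Σ_{t=1}^T 4 δ_t ξ_k C_k^{−1} [ α (z'_t − m_k) 𝒢(z'_t | m_k, C_k) − (z_t − m_k) 𝒢(z_t | m_k, C_k) ]. -/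
/-!
Only the kernels `𝒢(· | m_k, C_k)` depend on `m_k`. Since `C_k⁻¹` is symmetric, the quadratic form
`m ↦ (z - m)ᵀ C_k⁻¹ (z - m)` has gradient `-2 C_k⁻¹ (z - m)`, so `∇_{m_k} 𝒢(z | m_k, C_k)` is
`2 𝒢(z | m_k, C_k) C_k⁻¹ (z - m_k)`. The chain rule then gives the gradient
`ξ_k (α ∇𝒢(z'_t) - ∇𝒢(z_t))` for the residual `δ_t` and `2 δ_t` times it for its square.
-/

open Matrix

/-- The Gaussian kernel `𝒢(z | m, C) := exp(−(z − m)ᵀ C⁻¹ (z − m))`. -/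
noncomputable def gaussKer {D : ℕ} (z m : Fin D → ℝ) (C : Matrix (Fin D) (Fin D) ℝ) : ℝ :=
  Real.exp (-((z - m) ⬝ᵥ (C⁻¹ *ᵥ (z - m))))

/-- The GMM Q-function `Q(z) := Σ_k ξ_k 𝒢(z | m_k, C_k)`. -/
noncomputable def gmmQ {D K : ℕ} (ξ : Fin K → ℝ) (m : Fin K → Fin D → ℝ)
    (C : Fin K → Matrix (Fin D) (Fin D) ℝ) (z : Fin D → ℝ) : ℝ :=
  ∑ k, ξ k * gaussKer z (m k) (C k)

/-- The Bellman-residual objective `ℒ := Σ_t (g_t + α Q(z'_t) − Q(z_t))²`. -/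
noncomputable def bellmanLoss {D K T : ℕ} (g : Fin T → ℝ) (z z' : Fin T → Fin D → ℝ)
    (α : ℝ) (ξ : Fin K → ℝ) (m : Fin K → Fin D → ℝ)
    (C : Fin K → Matrix (Fin D) (Fin D) ℝ) : ℝ :=
  ∑ t, (g t + α * gmmQ ξ m C (z' t) - gmmQ ξ m C (z t)) ^ 2

open InnerProductSpace
open scoped RealInnerProductSpace

section GradientCalculus

variable {F : Type*} [NormedAddCommGroup F] [InnerProductSpace ℝ F] [CompleteSpace F]
  {f h : F → ℝ} {f' h' x : F}

theorem HasDerivAt.comp_hasGradientAt {φ : ℝ → ℝ} {φ' : ℝ} (hφ : HasDerivAt φ φ' (f x))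
    (hf : HasGradientAt f f' x) : HasGradientAt (fun y => φ (f y)) (φ' • f') x := by
  rw [hasGradientAt_iff_hasFDerivAt, map_smulₛₗ, starRingEnd_apply, star_trivial]
  exact hφ.comp_hasFDerivAt x hf.hasFDerivAt

theorem HasGradientAt.const_mul (c : ℝ) (hf : HasGradientAt f f' x) :
    HasGradientAt (fun y => c * f y) (c • f') x := by
  simpa using ((hasDerivAt_id (f x)).const_mul c).comp_hasGradientAt hf

theorem HasGradientAt.exp (hf : HasGradientAt f f' x) :
    HasGradientAt (fun y => Real.exp (f y)) (Real.exp (f x) • f') x :=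
  (Real.hasDerivAt_exp (f x)).comp_hasGradientAt hf

theorem HasGradientAt.sq (hf : HasGradientAt f f' x) :
    HasGradientAt (fun y => f y ^ 2) ((2 * f x) • f') x := by
  simpa using (hasDerivAt_pow 2 (f x)).comp_hasGradientAt hf

theorem HasGradientAt.add_const (c : ℝ) (hf : HasGradientAt f f' x) :
    HasGradientAt (fun y => f y + c) f' x :=
  hf.hasFDerivAt.add_const c

theorem HasGradientAt.const_add (c : ℝ) (hf : HasGradientAt f f' x) :
    HasGradientAt (fun y => c + f y) f' x :=
  hf.hasFDerivAt.const_add c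

theorem HasGradientAt.neg (hf : HasGradientAt f f' x) :
    HasGradientAt (fun y => -f y) (-f') x := by
  rw [hasGradientAt_iff_hasFDerivAt, map_neg]
  exact hf.hasFDerivAt.neg

theorem HasGradientAt.sub (hf : HasGradientAt f f' x) (hh : HasGradientAt h h' x) :
    HasGradientAt (fun y => f y - h y) (f' - h') x := by
  rw [hasGradientAt_iff_hasFDerivAt, map_sub]
  exact hf.hasFDerivAt.sub hh.hasFDerivAt

theorem HasGradientAt.sum {ι : Type*} {u : Finset ι} {f : ι → F → ℝ} {f' : ι → F}
    (hf : ∀ i ∈ u, HasGradientAt (f i) (f' i) x) :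
    HasGradientAt (fun y => ∑ i ∈ u, f i y) (∑ i ∈ u, f' i) x := by
  rw [hasGradientAt_iff_hasFDerivAt, map_sum]
  exact HasFDerivAt.fun_sum fun i hi => (hf i hi).hasFDerivAt

theorem LinearMap.IsSymmetric.hasGradientAt_inner_sub_apply_sub {A : F →L[ℝ] F}
    (hA : (A : F →ₗ[ℝ] F).IsSymmetric) (z x : F) :
    HasGradientAt (fun y => ⟪z - y, A (z - y)⟫) (-(2 : ℝ) • A (z - x)) x := by
  have hsub : HasFDerivAt (fun y => z - y) (-ContinuousLinearMap.id ℝ F) x := by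
    simpa using (hasFDerivAt_id x).const_sub z
  rw [hasGradientAt_iff_hasFDerivAt]
  refine (hsub.inner ℝ (A.hasFDerivAt.comp x hsub)).congr_fderiv ?_
  refine ContinuousLinearMap.ext fun v => ?_
  have hsymm : ⟪A (z - x), v⟫ = ⟪z - x, A v⟫ := hA (z - x) v
  simp only [toDual_apply_apply, ContinuousLinearMap.comp_apply, ContinuousLinearMap.prod_apply,
    fderivInnerCLM_apply, FunLike.coe_neg, Pi.neg_apply, ContinuousLinearMap.id_apply, map_neg,
    inner_neg_left, inner_neg_right, real_inner_smul_left, Function.comp_apply]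
  rw [real_inner_comm (A (z - x)) v, hsymm]
  ring

end GradientCalculus

open WithLp (toLp ofLp)

theorem Matrix.IsSymm.hasGradientAt_sub_dotProduct_mulVec_sub {ι : Type*} [Fintype ι]
    [DecidableEq ι] {M : Matrix ι ι ℝ} (hM : M.IsSymm) (z : ι → ℝ) (x : EuclideanSpace ℝ ι) :
    HasGradientAt (fun y : EuclideanSpace ℝ ι => (z - ofLp y) ⬝ᵥ (M *ᵥ (z - ofLp y)))
      (-(2 : ℝ) • toLp 2 (M *ᵥ (z - ofLp x))) x := by
  have hA : (toEuclideanCLM (𝕜 := ℝ) M : EuclideanSpace ℝ ι →ₗ[ℝ] _).IsSymmetric := by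
    rw [coe_toEuclideanCLM_eq_toEuclideanLin, isSymmetric_toEuclideanLin_iff,
      isHermitian_iff_isSymm]
    exact hM
  convert hA.hasGradientAt_inner_sub_apply_sub (toLp 2 z) x using 1
  · funext y
    rw [inner_toEuclideanCLM]
    rfl
  · rfl

noncomputable def gaussKerGrad {D : ℕ} (z m : Fin D → ℝ) (C : Matrix (Fin D) (Fin D) ℝ) :
    Fin D → ℝ :=
  (2 * gaussKer z m C) • (C⁻¹ *ᵥ (z - m))

theorem hasGradientAt_gaussKer {D : ℕ} {C : Matrix (Fin D) (Fin D) ℝ} (hC : C.IsSymm)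
    (z m : Fin D → ℝ) :
    HasGradientAt (fun y : EuclideanSpace ℝ (Fin D) => gaussKer z (ofLp y) C)
      (toLp 2 (gaussKerGrad z m C)) (toLp 2 m) := by
  convert (hC.inv.hasGradientAt_sub_dotProduct_mulVec_sub z (toLp 2 m)).neg.exp using 1
  · rfl
  · simp only [gaussKerGrad, gaussKer, WithLp.toLp_smul, neg_smul, neg_neg,
      smul_smul, mul_comm]

theorem gmmQ_update_eq {D K : ℕ} (ξ : Fin K → ℝ) (m : Fin K → Fin D → ℝ)
    (C : Fin K → Matrix (Fin D) (Fin D) ℝ) (k : Fin K) (w z : Fin D → ℝ) :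
    gmmQ ξ (Function.update m k w) C z
      = ξ k * gaussKer z w (C k) + ∑ j ∈ Finset.univ.erase k, ξ j * gaussKer z (m j) (C j) := by
  rw [gmmQ, ← Finset.add_sum_erase _ _ (Finset.mem_univ k), Function.update_self]
  congr 1
  refine Finset.sum_congr rfl fun j hj => ?_
  rw [Function.update_of_ne (Finset.ne_of_mem_erase hj)]

theorem hasGradientAt_gmmQ_update {D K : ℕ} {C : Fin K → Matrix (Fin D) (Fin D) ℝ} {k : Fin K}
    (hC : (C k).IsSymm) (ξ : Fin K → ℝ) (m : Fin K → Fin D → ℝ) (z : Fin D → ℝ) :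
    HasGradientAt (fun y : EuclideanSpace ℝ (Fin D) => gmmQ ξ (Function.update m k (ofLp y)) C z)
      (ξ k • toLp 2 (gaussKerGrad z (m k) (C k))) (toLp 2 (m k)) := by
  simp only [gmmQ_update_eq]
  exact ((hasGradientAt_gaussKer hC z (m k)).const_mul (ξ k)).add_const _

theorem hasGradientAt_bellmanLoss_update {D K T : ℕ} {C : Fin K → Matrix (Fin D) (Fin D) ℝ}
    {k : Fin K} (hC : (C k).IsSymm) (g : Fin T → ℝ) (z z' : Fin T → Fin D → ℝ) (α : ℝ)
    (ξ : Fin K → ℝ) (m : Fin K → Fin D → ℝ) :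
    HasGradientAt
      (fun y : EuclideanSpace ℝ (Fin D) => bellmanLoss g z z' α ξ (Function.update m k (ofLp y)) C)
      (∑ t, (2 * (g t + α * gmmQ ξ m C (z' t) - gmmQ ξ m C (z t))) •
        (α • ξ k • toLp 2 (gaussKerGrad (z' t) (m k) (C k))
          - ξ k • toLp 2 (gaussKerGrad (z t) (m k) (C k))))
      (toLp 2 (m k)) := by
  refine HasGradientAt.sum fun t _ => ?_
  have hres := (((hasGradientAt_gmmQ_update hC ξ m (z' t)).const_mul α).const_add (g t)).sub
    (hasGradientAt_gmmQ_update hC ξ m (z t))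
  simpa only [WithLp.ofLp_toLp, Function.update_eq_self] using hres.sq

theorem stmt_3_general (D T K : ℕ)
    (z z' : Fin T → Fin D → ℝ) (g : Fin T → ℝ)
    (α : ℝ)
    (ξ : Fin K → ℝ) (m : Fin K → Fin D → ℝ)
    (C : Fin K → Matrix (Fin D) (Fin D) ℝ)
    (hCs : ∀ k, (C k).IsSymm)
    (δ : Fin T → ℝ)
    (hδ : ∀ t, δ t = g t + α * gmmQ ξ m C (z' t) - gmmQ ξ m C (z t))
    (k : Fin K) :
    HasGradientAt
      (fun mk : EuclideanSpace ℝ (Fin D) =>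
        bellmanLoss g z z' α ξ (Function.update m k (WithLp.equiv 2 (Fin D → ℝ) mk)) C)
      ((WithLp.equiv 2 (Fin D → ℝ)).symm
        (∑ t, (4 * δ t * ξ k) •
          ((C k)⁻¹ *ᵥ
            ((α * gaussKer (z' t) (m k) (C k)) • (z' t - m k)
              - gaussKer (z t) (m k) (C k) • (z t - m k)))))
      ((WithLp.equiv 2 (Fin D → ℝ)).symm (m k)) := by
  simp only [WithLp.equiv_apply, WithLp.equiv_symm_apply]
  convert hasGradientAt_bellmanLoss_update (hCs k) g z z' α ξ m using 1
  simp only [← hδ, gaussKerGrad, WithLp.toLp_sum, WithLp.toLp_smul,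
    WithLp.toLp_sub, mulVec_sub, mulVec_smul]
  refine Finset.sum_congr rfl fun t _ => ?_
  module

theorem stmt_3 (D T K : ℕ) (hT : 0 < T) (hK : 0 < K)
    (z z' : Fin T → Fin D → ℝ) (g : Fin T → ℝ)
    (α : ℝ) (hα : α ∈ Set.Ico (0 : ℝ) 1)
    (ξ : Fin K → ℝ) (m : Fin K → Fin D → ℝ)
    (C : Fin K → Matrix (Fin D) (Fin D) ℝ)
    (hC : ∀ k, (C k).PosDef) (hCs : ∀ k, (C k).IsSymm)
    (δ : Fin T → ℝ)
    (hδ : ∀ t, δ t = g t + α * gmmQ ξ m C (z' t) - gmmQ ξ m C (z t))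
    (k : Fin K) :
    HasGradientAt
      (fun mk : EuclideanSpace ℝ (Fin D) =>
        bellmanLoss g z z' α ξ (Function.update m k (WithLp.equiv 2 (Fin D → ℝ) mk)) C)
      ((WithLp.equiv 2 (Fin D → ℝ)).symm
        (∑ t, (4 * δ t * ξ k) •
          ((C k)⁻¹ *ᵥ
            ((α * gaussKer (z' t) (m k) (C k)) • (z' t - m k)
              - gaussKer (z t) (m k) (C k) • (z t - m k)))))
      ((WithLp.equiv 2 (Fin D → ℝ)).symm (m k)) :=
  stmt_3_general D T K z z' g α ξ m C hCs δ hδ k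
end

section
/- With data z_t, z'_t ∈ ℝ^{D_z}, g_t ∈ ℝ (t = 1,…,T), α ∈ [0,1), parameters ξ ∈ ℝ^K, m_1,…,m_K ∈ ℝ^{D_z}, positive-definite symmetric C_1,…,C_K, let Q be the associated GMM Q-function, δ_t := g_t + α Q(z'_t) − Q(z_t), and for fixed k let B_{tk} := α (z'_t − m_k)(z'_t − m_k)ᵀ 𝒢(z'_t | m_k, C_k) − (z_t − m_k)(z_t − m_k)ᵀ 𝒢(z_t | m_k, C_k). Define G_k := Σ_{t=1}^T 4 δ_t ξ_k [ C_k^{−1} B_{tk} + B_{tk} C_k^{−1} ]. Then: (a) G_k is symmetric; and (b) G_k is the Riemannian gradient of ℒ with respect to C_k under the Bures–Wasserstein metric, i.e., for every symmetric matrix Γ, (1/2) tr( L_{C_k}(G_k) Γ ) equals the directional derivative of ℒ (as a function of C_k alone) at C_k along Γ. -/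
open Matrix

attribute [local instance] Matrix.normedAddCommGroup Matrix.normedSpace

/-!
The loss depends on `C_k` only through `C_k⁻¹`, whose derivative is `Γ ↦ -C_k⁻¹ Γ C_k⁻¹`. The
chain rule therefore gives `dℒ(Γ) = tr(E Γ)` with `E = C_k⁻¹ S C_k⁻¹` and `S = Σ_t 2 δ_t ξ_k B_{tk}`.
Since `C (C⁻¹ S C⁻¹) + (C⁻¹ S C⁻¹) C = S C⁻¹ + C⁻¹ S`, we get `G_k = 2 (C_k E + E C_k)`, so
`L_{C_k}(G_k) = 2 E` and `½ tr(L_{C_k}(G_k) Γ) = tr(E Γ) = dℒ(Γ)`. Here `L_C` is well defined for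
positive definite `C`: if `C Y + Y C = 0`, then `tr(Yᴴ C Y) + tr(Y C Yᴴ) = tr(Yᴴ (C Y + Y C)) = 0`
is a sum of two nonnegative terms, so `Yᴴ C Y = 0` and hence `Y = 0`.
-/

namespace Matrix

section CommSemiring

variable {α n : Type*} [Fintype n] [CommSemiring α]

theorem IsSymm.mul_mul_self {A S : Matrix n n α} (hA : A.IsSymm) (hS : S.IsSymm) :
    (A * S * A).IsSymm := by
  rw [IsSymm, transpose_mul, transpose_mul, hA.eq, hS.eq, Matrix.mul_assoc]

theorem IsSymm.mul_add_mul_comm {A B : Matrix n n α} (hA : A.IsSymm) (hB : B.IsSymm) :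
    (A * B + B * A).IsSymm := by
  rw [IsSymm, transpose_add, transpose_mul, transpose_mul, hA.eq, hB.eq, add_comm]

theorem trace_vecMulVec_mul (u w : n → α) (N : Matrix n n α) :
    (vecMulVec u w * N).trace = w ⬝ᵥ N *ᵥ u := by
  rw [vecMulVec_mul, trace_vecMulVec, dotProduct_comm, dotProduct_mulVec]

end CommSemiring

theorem mul_conj_inv_add_conj_inv_mul {α n : Type*} [Fintype n] [DecidableEq n] [CommRing α]
    {C S : Matrix n n α} (hC : IsUnit C) :
    C * (C⁻¹ * S * C⁻¹) + C⁻¹ * S * C⁻¹ * C = S * C⁻¹ + C⁻¹ * S := by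
  have hdet := (isUnit_iff_isUnit_det C).mp hC
  rw [← Matrix.mul_assoc, ← Matrix.mul_assoc, mul_nonsing_inv _ hdet, Matrix.one_mul,
    Matrix.mul_assoc, nonsing_inv_mul _ hdet, Matrix.mul_one, add_comm]

variable {𝕜 n : Type*} [RCLike 𝕜] [Fintype n] [DecidableEq n]

open scoped ComplexOrder

theorem PosDef.eq_zero_of_mul_add_mul_eq_zero {C Y : Matrix n n 𝕜} (hC : C.PosDef)
    (h : C * Y + Y * C = 0) : Y = 0 := by
  have hleft : (Yᴴ * C * Y).PosSemidef := hC.posSemidef.conjTranspose_mul_mul_same Y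
  have hright : (Y * C * Yᴴ).PosSemidef := hC.posSemidef.mul_mul_conjTranspose_same Y
  have hsum : (Yᴴ * C * Y).trace + (Y * C * Yᴴ).trace = 0 := by
    rw [trace_mul_comm (Y * C), ← trace_add, Matrix.mul_assoc, ← Matrix.mul_assoc Yᴴ Y,
      Matrix.mul_assoc, ← Matrix.mul_add, h, Matrix.mul_zero, trace_zero]
  have hzero : Yᴴ * C * Y = 0 := hleft.trace_eq_zero_iff.mp
    ((add_eq_zero_iff_of_nonneg hleft.trace_nonneg hright.trace_nonneg).mp hsum).1
  refine ext_of_mulVec_single fun j => ?_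
  by_contra hne
  rw [zero_mulVec] at hne
  have hpos := hC.dotProduct_mulVec_pos hne
  rw [star_mulVec, dotProduct_mulVec, vecMul_vecMul, ← dotProduct_mulVec, mulVec_mulVec,
    hzero, zero_mulVec, dotProduct_zero] at hpos
  exact lt_irrefl _ hpos

theorem PosDef.lyapunov_injective {C : Matrix n n 𝕜} (hC : C.PosDef) :
    Function.Injective fun X => C * X + X * C := fun X Y hXY =>
  sub_eq_zero.mp <| hC.eq_zero_of_mul_add_mul_eq_zero <| by
    simp only at hXY
    rw [Matrix.mul_sub, Matrix.sub_mul, sub_add_sub_comm, hXY, sub_self]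

/-- `hasFDerivAt_ringInverse` needs a normed ring, which the entrywise sup norm does not give, so
it is transported along the algebra isomorphism `toEuclideanCLM`. -/
theorem hasFDerivAt_inv {A : Matrix n n 𝕜} (hA : IsUnit A) :
    HasFDerivAt (fun M : Matrix n n 𝕜 => M⁻¹)
      (-(LinearMap.mulLeftRight 𝕜 (A⁻¹, A⁻¹)).toContinuousLinearMap) A := by
  let φ := toEuclideanCLM (n := n) (𝕜 := 𝕜)
  let e := φ.toAlgEquiv.toLinearEquiv.toContinuousLinearEquiv
  have he : ∀ M, e M = φ M := fun M => rfl
  have hφ_inv : ∀ M, φ M⁻¹ = Ring.inverse (φ M) := by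
    intro M
    by_cases hM : IsUnit M
    · calc φ M⁻¹ = Ring.inverse (φ M) * (φ M * φ M⁻¹) :=
            (Ring.inverse_mul_cancel_left _ _ (hM.map φ)).symm
        _ = Ring.inverse (φ M) := by
          rw [← map_mul, mul_nonsing_inv _ ((isUnit_iff_isUnit_det M).mp hM), map_one, mul_one]
    · rw [nonsing_inv_eq_ringInverse, Ring.inverse_non_unit _ hM, Ring.inverse_non_unit, map_zero]
      exact fun h => hM ((isUnit_map_iff φ M).mp h)
  have hinv : (fun M : Matrix n n 𝕜 => M⁻¹) = e.symm ∘ Ring.inverse ∘ e := by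
    funext M
    change M⁻¹ = e.symm (Ring.inverse (e M))
    rw [he, ← hφ_inv, ← he, e.symm_apply_apply]
  obtain ⟨u, hu⟩ := hA.map φ
  have hring := hasFDerivAt_ringInverse (𝕜 := 𝕜) u
  rw [hu] at hring
  rw [hinv]
  refine (e.symm.hasFDerivAt.comp A (hring.comp A e.hasFDerivAt)).congr_fderiv ?_
  ext1 H
  have hu' : (↑u⁻¹ : EuclideanSpace 𝕜 n →L[𝕜] EuclideanSpace 𝕜 n) = φ A⁻¹ := by
    rw [hφ_inv, ← hu, Ring.inverse_unit]
  change e.symm (-(↑u⁻¹ * e H * ↑u⁻¹)) = -(A⁻¹ * H * A⁻¹)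
  rw [e.symm_apply_eq, hu', map_neg, he, he, map_mul, map_mul]

noncomputable def traceMulCLM : Matrix n n 𝕜 →ₗ[𝕜] Matrix n n 𝕜 →L[𝕜] 𝕜 where
  toFun P := (traceLinearMap n 𝕜 𝕜 ∘ₗ LinearMap.mulLeft 𝕜 P).toContinuousLinearMap
  map_add' P Q := by ext1 Γ; simp [Matrix.add_mul]
  map_smul' c P := by ext1 Γ; simp

@[simp]
theorem traceMulCLM_apply (P Γ : Matrix n n 𝕜) : traceMulCLM P Γ = (P * Γ).trace := rfl

/-- For the Bures–Wasserstein metric `⟨Γ₁, Γ₂⟩_C = ½ tr(L_C(Γ₁) Γ₂)`, the gradient of `f` at `C`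
is `2 (C E + E C)`, where `E` is the Euclidean gradient; `X` is `L_C` of it. -/
theorem _root_.HasFDerivAt.half_trace_mul_eq_fderiv_of_lyapunov {f : Matrix n n 𝕜 → 𝕜}
    {C E X : Matrix n n 𝕜} (hf : HasFDerivAt f (traceMulCLM E) C) (hC : C.PosDef)
    (hX : C * X + X * C = 2 • (C * E + E * C)) (Γ : Matrix n n 𝕜) :
    (1 / 2 : 𝕜) * (X * Γ).trace = fderiv 𝕜 f C Γ := by
  have hXE : X = 2 • E := hC.lyapunov_injective <| by
    simp only [hX, Matrix.mul_smul, Matrix.smul_mul, smul_add]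
  rw [hf.fderiv, hXE, Matrix.smul_mul, trace_smul, traceMulCLM_apply, two_smul]
  ring

end Matrix

noncomputable def gaussScatter {D : ℕ} (z m : Fin D → ℝ) (C : Matrix (Fin D) (Fin D) ℝ) :
    Matrix (Fin D) (Fin D) ℝ :=
  gaussKer z m C • vecMulVec (z - m) (z - m)

theorem isSymm_gaussScatter {D : ℕ} (z m : Fin D → ℝ) (C : Matrix (Fin D) (Fin D) ℝ) :
    (gaussScatter z m C).IsSymm :=
  IsSymm.smul (transpose_vecMulVec _ _) _

theorem hasFDerivAt_gaussKer {D : ℕ} (z m : Fin D → ℝ) {C : Matrix (Fin D) (Fin D) ℝ}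
    (hC : IsUnit C) :
    HasFDerivAt (gaussKer z m) (traceMulCLM (C⁻¹ * gaussScatter z m C * C⁻¹)) C := by
  have hquad : HasFDerivAt (fun M => (vecMulVec (z - m) (z - m) * M⁻¹).trace) _ C :=
    (traceMulCLM (vecMulVec (z - m) (z - m))).hasFDerivAt.comp C (hasFDerivAt_inv hC)
  have hexp := hquad.neg.exp
  simp only [trace_vecMulVec_mul] at hexp
  refine hexp.congr_fderiv (ContinuousLinearMap.ext fun Γ => ?_)
  change Real.exp (-((z - m) ⬝ᵥ C⁻¹ *ᵥ (z - m)))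
      * -(vecMulVec (z - m) (z - m) * -(C⁻¹ * Γ * C⁻¹)).trace
    = (C⁻¹ * gaussKer z m C • vecMulVec (z - m) (z - m) * C⁻¹ * Γ).trace
  rw [Matrix.mul_neg, trace_neg, neg_neg, Matrix.mul_smul, Matrix.smul_mul, Matrix.smul_mul,
    trace_smul, smul_eq_mul]
  simp only [Matrix.mul_assoc]
  rw [trace_mul_comm C⁻¹]
  simp only [gaussKer, Matrix.mul_assoc]

section BellmanLoss

variable {D K T : ℕ} (g : Fin T → ℝ) (z z' : Fin T → Fin D → ℝ) (α : ℝ) (ξ : Fin K → ℝ)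
  (m : Fin K → Fin D → ℝ) (C : Fin K → Matrix (Fin D) (Fin D) ℝ) (k : Fin K)

/-- `δ_t` -/
noncomputable def bellmanResidual (t : Fin T) : ℝ :=
  g t + α * gmmQ ξ m C (z' t) - gmmQ ξ m C (z t)

/-- `B_{tk}` -/
noncomputable def bellmanScatter (t : Fin T) : Matrix (Fin D) (Fin D) ℝ :=
  α • gaussScatter (z' t) (m k) (C k) - gaussScatter (z t) (m k) (C k)

theorem hasFDerivAt_gmmQ_update (w : Fin D → ℝ) (hC : IsUnit (C k)) :
    HasFDerivAt (fun M => gmmQ ξ m (Function.update C k M) w)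
      (traceMulCLM (ξ k • ((C k)⁻¹ * gaussScatter w (m k) (C k) * (C k)⁻¹))) (C k) := by
  have hsplit : (fun M => gmmQ ξ m (Function.update C k M) w)
      = fun M => ξ k * gaussKer w (m k) M
          + ∑ j ∈ Finset.univ.erase k, ξ j * gaussKer w (m j) (C j) := by
    funext M
    rw [gmmQ, ← Finset.add_sum_erase _ _ (Finset.mem_univ k), Function.update_self]
    congr 1
    exact Finset.sum_congr rfl fun j hj => by rw [Function.update_of_ne (Finset.ne_of_mem_erase hj)]
  rw [hsplit, map_smul]
  exact ((hasFDerivAt_gaussKer w (m k) hC).const_mul (ξ k)).add_const _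

theorem hasFDerivAt_bellmanResidual_update (t : Fin T) (hC : IsUnit (C k)) :
    HasFDerivAt (fun M => bellmanResidual g z z' α ξ m (Function.update C k M) t)
      (traceMulCLM (ξ k • ((C k)⁻¹ * bellmanScatter z z' α m C k t * (C k)⁻¹))) (C k) := by
  refine ((((hasFDerivAt_gmmQ_update ξ m C k (z' t) hC).const_mul α).const_add (g t)).sub
    (hasFDerivAt_gmmQ_update ξ m C k (z t) hC)).congr_fderiv ?_
  rw [bellmanScatter, Matrix.mul_sub, Matrix.sub_mul, Matrix.mul_smul, Matrix.smul_mul, smul_sub,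
    map_sub, smul_comm (ξ k) α]
  simp only [map_smul]
  rfl

theorem hasFDerivAt_bellmanLoss_update (hC : IsUnit (C k)) :
    HasFDerivAt (fun M => bellmanLoss g z z' α ξ m (Function.update C k M))
      (traceMulCLM ((C k)⁻¹ *
        (∑ t, (2 * bellmanResidual g z z' α ξ m C t * ξ k) • bellmanScatter z z' α m C k t)
          * (C k)⁻¹)) (C k) := by
  refine (HasFDerivAt.fun_sum fun t _ =>
    (hasFDerivAt_bellmanResidual_update g z z' α ξ m C k t hC).pow 2).congr_fderiv ?_
  simp only [Function.update_eq_self, Finset.mul_sum, Finset.sum_mul, map_sum]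
  refine Finset.sum_congr rfl fun t _ => ?_
  simp only [Matrix.mul_smul, Matrix.smul_mul, map_smul]
  ext1 Γ
  -- The two sides carry defeq but syntactically different topologies on matrices (the product
  -- topology and the one of the sup norm), which blocks `smul_smul`; compare values instead.
  change (2 • bellmanResidual g z z' α ξ m C t ^ (2 - 1)) * (ξ k * traceMulCLM _ Γ)
    = 2 * bellmanResidual g z z' α ξ m C t * ξ k * traceMulCLM _ Γ
  rw [nsmul_eq_mul]
  ring

end BellmanLoss

theorem stmt_10_general (D T K : ℕ)
    (z z' : Fin T → Fin D → ℝ) (g : Fin T → ℝ)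
    (α : ℝ)
    (ξ : Fin K → ℝ) (m : Fin K → Fin D → ℝ)
    (C : Fin K → Matrix (Fin D) (Fin D) ℝ)
    (hC : ∀ k, (C k).PosDef) (hCs : ∀ k, (C k).IsSymm)
    (δ : Fin T → ℝ)
    (hδ : ∀ t, δ t = g t + α * gmmQ ξ m C (z' t) - gmmQ ξ m C (z t))
    (k : Fin K)
    (B : Fin T → Matrix (Fin D) (Fin D) ℝ)
    (hB : ∀ t, B t =
      (α * gaussKer (z' t) (m k) (C k)) • vecMulVec (z' t - m k) (z' t - m k)
        - gaussKer (z t) (m k) (C k) • vecMulVec (z t - m k) (z t - m k))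
    (G : Matrix (Fin D) (Fin D) ℝ)
    (hG : G = ∑ t, (4 * δ t * ξ k) • ((C k)⁻¹ * B t + B t * (C k)⁻¹)) :
    G.IsSymm ∧
    DifferentiableAt ℝ
      (fun Ck : Matrix (Fin D) (Fin D) ℝ =>
        bellmanLoss g z z' α ξ m (Function.update C k Ck)) (C k) ∧
    ∀ (Γ X : Matrix (Fin D) (Fin D) ℝ), Γ.IsSymm →
      C k * X + X * C k = G →
      (1 / 2 : ℝ) * (X * Γ).trace
        = fderiv ℝ
            (fun Ck : Matrix (Fin D) (Fin D) ℝ =>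
              bellmanLoss g z z' α ξ m (Function.update C k Ck)) (C k) Γ := by
  have hδB : δ = bellmanResidual g z z' α ξ m C ∧ B = bellmanScatter z z' α m C k :=
    ⟨funext hδ, funext fun t => by rw [hB, bellmanScatter, gaussScatter, gaussScatter, mul_smul]⟩
  obtain ⟨rfl, rfl⟩ := hδB
  set S := ∑ t, (2 * bellmanResidual g z z' α ξ m C t * ξ k) • bellmanScatter z z' α m C k t
  have hloss := hasFDerivAt_bellmanLoss_update g z z' α ξ m C k (hC k).isUnit
  have hGE : G = 2 • (C k * ((C k)⁻¹ * S * (C k)⁻¹) + (C k)⁻¹ * S * (C k)⁻¹ * C k) := by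
    rw [mul_conj_inv_add_conj_inv_mul (hC k).isUnit, hG, Finset.sum_mul, Finset.mul_sum,
      ← Finset.sum_add_distrib, Finset.smul_sum]
    refine Finset.sum_congr rfl fun t _ => ?_
    simp only [Matrix.smul_mul, Matrix.mul_smul, ← smul_add]
    rw [add_comm (_ * _)]
    module
  have hS : S.IsSymm := Finset.sum_induction _ IsSymm (fun _ _ => IsSymm.add) isSymm_zero
    fun t _ => ((isSymm_gaussScatter _ _ _).smul α |>.sub (isSymm_gaussScatter _ _ _)).smul _
  have hCinv : ((C k)⁻¹).IsSymm := by rw [IsSymm, transpose_nonsing_inv, (hCs k).eq]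
  exact ⟨hGE ▸ ((hCs k).mul_add_mul_comm (hCinv.mul_mul_self hS)).smul 2,
    hloss.differentiableAt, fun Γ X _ hX =>
      hloss.half_trace_mul_eq_fderiv_of_lyapunov (hC k) (hX.trans hGE) Γ⟩

theorem stmt_10 (D T K : ℕ) (hT : 0 < T) (hK : 0 < K)
    (z z' : Fin T → Fin D → ℝ) (g : Fin T → ℝ)
    (α : ℝ) (hα : α ∈ Set.Ico (0 : ℝ) 1)
    (ξ : Fin K → ℝ) (m : Fin K → Fin D → ℝ)
    (C : Fin K → Matrix (Fin D) (Fin D) ℝ)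
    (hC : ∀ k, (C k).PosDef) (hCs : ∀ k, (C k).IsSymm)
    (δ : Fin T → ℝ)
    (hδ : ∀ t, δ t = g t + α * gmmQ ξ m C (z' t) - gmmQ ξ m C (z t))
    (k : Fin K)
    (B : Fin T → Matrix (Fin D) (Fin D) ℝ)
    (hB : ∀ t, B t =
      (α * gaussKer (z' t) (m k) (C k)) • vecMulVec (z' t - m k) (z' t - m k)
        - gaussKer (z t) (m k) (C k) • vecMulVec (z t - m k) (z t - m k))
    (G : Matrix (Fin D) (Fin D) ℝ)
    (hG : G = ∑ t, (4 * δ t * ξ k) • ((C k)⁻¹ * B t + B t * (C k)⁻¹)) :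
    G.IsSymm ∧
    DifferentiableAt ℝ
      (fun Ck : Matrix (Fin D) (Fin D) ℝ =>
        bellmanLoss g z z' α ξ m (Function.update C k Ck)) (C k) ∧
    ∀ (Γ X : Matrix (Fin D) (Fin D) ℝ), Γ.IsSymm →
      C k * X + X * C k = G →
      (1 / 2 : ℝ) * (X * Γ).trace
        = fderiv ℝ
            (fun Ck : Matrix (Fin D) (Fin D) ℝ =>
              bellmanLoss g z z' α ξ m (Function.update C k Ck)) (C k) Γ :=
  stmt_10_general D T K z z' g α ξ m C hC hCs δ hδ k B hB G hG
end
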